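/- arXiv:2602.22700 — 4 statements merged into one kernel-verified Lean document; each statement's English description precedes it below -/
import Mathlib

section
/- Fix n ∈ ℕ, a vector ℓ ∈ ℝⁿ, and a nonempty index set I ⊆ {1,…,n}. Then for every vector ℓ' ∈ ℝⁿ that realizes I as a top set, setting t := min_{i ∈ I} ℓ'_i, one has ‖ℓ' − ℓ‖₁ ≥ f_{ℓ,I}(t): every feasible vector is at ℓ¹ distance at least the threshold cost evaluated at the smallest selected coordinate of ℓ'. -/
/-- `ℓ'` realizes `I` as a top set: every selected coordinate is at least every
unselected coordinate. -/
def realizesTop (n : ℕ) (I : Finset (Fin n)) (ℓ' : Fin n → ℝ) : Prop :=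
  ∀ i ∈ I, ∀ j ∉ I, ℓ' j ≤ ℓ' i

/-- The ℓ¹ norm of a vector in ℝⁿ. -/
def l1 (n : ℕ) (v : Fin n → ℝ) : ℝ := ∑ k, |v k|

/-- The threshold cost at threshold `t`. -/
def thresholdCost (n : ℕ) (ℓ : Fin n → ℝ) (I : Finset (Fin n)) (t : ℝ) : ℝ :=
  ∑ i ∈ I, max (t - ℓ i) 0 + ∑ j ∈ Iᶜ, max (ℓ j - t) 0

theorem thresholdCost_at_min_le (n : ℕ) (ℓ : Fin n → ℝ) (I : Finset (Fin n))
    (hI : I.Nonempty) (ℓ' : Fin n → ℝ) (h : realizesTop n I ℓ') :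
    thresholdCost n ℓ I (I.inf' hI ℓ') ≤ l1 n (fun k => ℓ' k - ℓ k) := by
  set t := I.inf' hI ℓ' with ht
  have hsplit : l1 n (fun k => ℓ' k - ℓ k)
      = ∑ i ∈ I, |ℓ' i - ℓ i| + ∑ j ∈ Iᶜ, |ℓ' j - ℓ j| := by
    rw [l1, ← Finset.sum_add_sum_compl I]
  rw [thresholdCost, hsplit]
  gcongr with i hi j hj
  · have h1 : t ≤ ℓ' i := Finset.inf'_le _ hi
    have : max (t - ℓ i) 0 ≤ max (ℓ' i - ℓ i) 0 := by
      apply max_le_max _ le_rfl; linarith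
    refine this.trans ?_
    exact max_le (le_abs_self _) (abs_nonneg _)
  · obtain ⟨i, hi, hmin⟩ := Finset.exists_mem_eq_inf' hI ℓ'
    have h1 : ℓ' j ≤ t := by rw [← ht] at hmin; rw [hmin]; exact h i hi j (Finset.mem_compl.mp hj)
    have : max (ℓ j - t) 0 ≤ max (ℓ j - ℓ' j) 0 := by
      apply max_le_max _ le_rfl; linarith
    refine this.trans ?_
    have := abs_sub_comm (ℓ' j) (ℓ j)
    refine max_le ?_ (abs_nonneg _)
    rw [this]; exact le_abs_self _
end

section
/- For every n ∈ ℕ, every vector ℓ ∈ ℝⁿ, and every index set I ⊆ {1,…,n}, the top-K distance equals the infimum of the threshold cost over all thresholds: Δ(ℓ, I) = inf_{t ∈ ℝ} f_{ℓ,I}(t). -/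
/-- The top-K distance: the infimum of ℓ¹ distances from `ℓ` to vectors realizing
`I` as a top set. -/
noncomputable def topKDist (n : ℕ) (ℓ : Fin n → ℝ) (I : Finset (Fin n)) : ℝ :=
  sInf {d : ℝ | ∃ ℓ' : Fin n → ℝ, realizesTop n I ℓ' ∧ d = l1 n (fun k => ℓ' k - ℓ k)}

lemma thresholdCost_nonneg (n : ℕ) (ℓ : Fin n → ℝ) (I : Finset (Fin n)) (t : ℝ) :
    0 ≤ thresholdCost n ℓ I t :=
  add_nonneg (Finset.sum_nonneg fun _ _ => le_max_right _ _)
    (Finset.sum_nonneg fun _ _ => le_max_right _ _)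

lemma thresholdCost_mem (n : ℕ) (ℓ : Fin n → ℝ) (I : Finset (Fin n)) (t : ℝ) :
    thresholdCost n ℓ I t ∈
      {d : ℝ | ∃ ℓ' : Fin n → ℝ, realizesTop n I ℓ' ∧ d = l1 n (fun k => ℓ' k - ℓ k)} := by
  refine ⟨fun k => if k ∈ I then max (ℓ k) t else min (ℓ k) t, ?_, ?_⟩
  · intro i hi j hj
    simp only [if_pos hi, if_neg hj]
    exact le_trans (min_le_right _ _) (le_max_right _ _)
  · unfold thresholdCost l1
    rw [← Finset.sum_add_sum_compl I]
    congr 1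
    · refine Finset.sum_congr rfl fun i hi => ?_
      simp only [if_pos hi]
      rcases le_total (ℓ i) t with h | h
      · rw [max_eq_right h, max_eq_left (by linarith), abs_of_nonneg (by linarith)]
      · rw [max_eq_left h, max_eq_right (by linarith)]
        simp
    · refine Finset.sum_congr rfl fun j hj => ?_
      rw [Finset.mem_compl] at hj
      simp only [if_neg hj]
      rcases le_total (ℓ j) t with h | h
      · rw [min_eq_left h, max_eq_right (by linarith)]
        simp
      · rw [min_eq_right h, max_eq_left (by linarith), abs_of_nonpos (by linarith)]
        ring

theorem topKDist_eq_iInf_thresholdCost (n : ℕ) (ℓ : Fin n → ℝ) (I : Finset (Fin n)) :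
    topKDist n ℓ I = ⨅ t : ℝ, thresholdCost n ℓ I t := by
  set S := {d : ℝ | ∃ ℓ' : Fin n → ℝ, realizesTop n I ℓ' ∧ d = l1 n (fun k => ℓ' k - ℓ k)}
    with hSdef
  have hSbdd : BddBelow S := by
    refine ⟨0, ?_⟩
    rintro d ⟨ℓ', _, rfl⟩
    exact Finset.sum_nonneg fun _ _ => abs_nonneg _
  have hSne : S.Nonempty := ⟨_, thresholdCost_mem n ℓ I 0⟩
  have hbdd : BddBelow (Set.range (thresholdCost n ℓ I)) := by
    refine ⟨0, ?_⟩
    rintro _ ⟨t, rfl⟩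
    exact thresholdCost_nonneg n ℓ I t
  apply le_antisymm
  · exact le_ciInf fun t => csInf_le hSbdd (thresholdCost_mem n ℓ I t)
  · refine le_csInf hSne ?_
    rintro d ⟨ℓ', hreal, rfl⟩
    have : ∃ t, thresholdCost n ℓ I t ≤ l1 n (fun k => ℓ' k - ℓ k) := by
      rcases I.eq_empty_or_nonempty with hI | hI
      · cases isEmpty_or_nonempty (Fin n) with
        | inl h =>
          refine ⟨0, ?_⟩
          simp [thresholdCost, l1, Finset.univ_eq_empty, hI]
        | inr h =>
          set T := Finset.univ.sup' (Finset.univ_nonempty (α := Fin n)) ℓ with hT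
          refine ⟨T, ?_⟩
          have : thresholdCost n ℓ I T = 0 := by
            unfold thresholdCost
            rw [hI]
            simp only [Finset.sum_empty, zero_add]
            refine Finset.sum_eq_zero fun j _ => ?_
            have := Finset.le_sup' ℓ (Finset.mem_univ j)
            exact max_eq_right (by linarith)
          rw [this]
          exact Finset.sum_nonneg fun _ _ => abs_nonneg _
      · refine ⟨I.inf' hI ℓ', ?_⟩
        unfold thresholdCost l1
        rw [← Finset.sum_add_sum_compl I]
        apply add_le_add
        · refine Finset.sum_le_sum fun i hi => ?_
          have ht : I.inf' hI ℓ' ≤ ℓ' i := Finset.inf'_le ℓ' hi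
          show max (I.inf' hI ℓ' - ℓ i) 0 ≤ |ℓ' i - ℓ i|
          refine max_le (le_trans (by linarith) (le_abs_self _)) (abs_nonneg _)
        · refine Finset.sum_le_sum fun j hj => ?_
          rw [Finset.mem_compl] at hj
          have ht : ℓ' j ≤ I.inf' hI ℓ' := by
            refine Finset.le_inf' hI _ fun i hi => hreal i hi j hj
          show max (ℓ j - I.inf' hI ℓ') 0 ≤ |ℓ' j - ℓ j|
          refine max_le (by linarith [neg_abs_le (ℓ' j - ℓ j)]) (abs_nonneg _)
    obtain ⟨t, ht⟩ := this
    exact le_trans (ciInf_le hbdd t) ht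
end

section
/- Fix n ≥ 1, a vector ℓ ∈ ℝⁿ, and an index set I ⊆ {1,…,n}. Then the infimum of the threshold cost over all real thresholds is attained at one of the n coordinate values of ℓ: inf_{t ∈ ℝ} f_{ℓ,I}(t) = min_{u ∈ {1,…,n}} f_{ℓ,I}(ℓ_u). -/
lemma key (n : ℕ) (hn : 1 ≤ n) (ℓ : Fin n → ℝ) (I : Finset (Fin n)) (t : ℝ) :
    ∃ u : Fin n, thresholdCost n ℓ I (ℓ u) ≤ thresholdCost n ℓ I t := by
  have hne : (Finset.univ : Finset (Fin n)).Nonempty := ⟨⟨0, hn⟩, Finset.mem_univ _⟩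
  by_cases hS : ∃ i, ℓ i ≤ t
  · by_cases hT : ∃ i, t ≤ ℓ i
    · -- main case: t is between some coordinates
      obtain ⟨i0, hi0⟩ := hS
      obtain ⟨j0, hj0⟩ := hT
      set S : Finset (Fin n) := Finset.univ.filter (fun i => ℓ i ≤ t) with hSdef
      set T : Finset (Fin n) := Finset.univ.filter (fun i => t ≤ ℓ i) with hTdef
      obtain ⟨u, huS, hu⟩ := Finset.exists_max_image S ℓ ⟨i0, by simp [hSdef, hi0]⟩
      obtain ⟨v, hvT, hv⟩ := Finset.exists_min_image T ℓ ⟨j0, by simp [hTdef, hj0]⟩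
      have hut : ℓ u ≤ t := (Finset.mem_filter.1 huS).2
      have htv : t ≤ ℓ v := (Finset.mem_filter.1 hvT).2
      have huv : ℓ u ≤ ℓ v := le_trans hut htv
      -- dichotomy
      have hdich : ∀ i : Fin n, ℓ i ≤ ℓ u ∨ ℓ v ≤ ℓ i := by
        intro i
        rcases le_total (ℓ i) t with h | h
        · exact Or.inl (hu i (by simp [hSdef, h]))
        · exact Or.inr (hv i (by simp [hTdef, h]))
      set A : ℕ := (I.filter (fun i => ℓ i ≤ ℓ u)).card with hA
      set C1 : ℝ := ∑ i ∈ I.filter (fun i => ℓ i ≤ ℓ u), ℓ i with hC1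
      set B : ℕ := (Iᶜ.filter (fun j => ¬ ℓ j ≤ ℓ u)).card with hB
      set C2 : ℝ := ∑ j ∈ Iᶜ.filter (fun j => ¬ ℓ j ≤ ℓ u), ℓ j with hC2
      have hform : ∀ s : ℝ, ℓ u ≤ s → s ≤ ℓ v →
          thresholdCost n ℓ I s = ((A : ℝ) * s - C1) + (C2 - (B : ℝ) * s) := by
        intro s hus hsv
        unfold thresholdCost
        have e1 : ∑ i ∈ I, max (s - ℓ i) 0
            = ∑ i ∈ I, (if ℓ i ≤ ℓ u then s - ℓ i else 0) := by
          refine Finset.sum_congr rfl fun i _ => ?_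
          by_cases h : ℓ i ≤ ℓ u
          · simp only [h, if_true]
            exact max_eq_left (by linarith)
          · simp only [h, if_false]
            have : ℓ v ≤ ℓ i := (hdich i).resolve_left h
            exact max_eq_right (by linarith)
        have e2 : ∑ j ∈ Iᶜ, max (ℓ j - s) 0
            = ∑ j ∈ Iᶜ, (if ¬ ℓ j ≤ ℓ u then ℓ j - s else 0) := by
          refine Finset.sum_congr rfl fun j _ => ?_
          by_cases h : ℓ j ≤ ℓ u
          · simp only [h, not_true, if_false]
            exact max_eq_right (by linarith)
          · simp only [h, not_false_iff, if_true]
            have : ℓ v ≤ ℓ j := (hdich j).resolve_left h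
            exact max_eq_left (by linarith)
        rw [e1, e2, ← Finset.sum_filter, ← Finset.sum_filter]
        rw [Finset.sum_sub_distrib, Finset.sum_sub_distrib, Finset.sum_const,
          Finset.sum_const, nsmul_eq_mul, nsmul_eq_mul]
      have h1 := hform (ℓ u) le_rfl huv
      have h2 := hform (ℓ v) huv le_rfl
      have h3 := hform t hut htv
      rcases le_total (B : ℝ) (A : ℝ) with h | h
      · exact ⟨u, by rw [h1, h3]; nlinarith⟩
      · exact ⟨v, by rw [h2, h3]; nlinarith⟩
    · -- all coordinates are < t : take the max coordinate
      push_neg at hT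
      obtain ⟨u, _, hu⟩ := Finset.exists_max_image Finset.univ ℓ hne
      refine ⟨u, ?_⟩
      unfold thresholdCost
      refine add_le_add (Finset.sum_le_sum fun i _ => ?_) (Finset.sum_le_sum fun j _ => ?_)
      · exact max_le_max (by linarith [hT u]) le_rfl
      · rw [max_eq_right (by linarith [hu j (Finset.mem_univ j)])]
        exact le_max_right _ _
  · -- all coordinates are > t : take the min coordinate
    push_neg at hS
    obtain ⟨u, _, hu⟩ := Finset.exists_min_image Finset.univ ℓ hne
    refine ⟨u, ?_⟩
    unfold thresholdCost
    refine add_le_add (Finset.sum_le_sum fun i _ => ?_) (Finset.sum_le_sum fun j _ => ?_)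
    · rw [max_eq_right (by linarith [hu i (Finset.mem_univ i)])]
      exact le_max_right _ _
    · exact max_le_max (by linarith [hS u]) le_rfl

theorem iInf_thresholdCost_attained_at_coordinate (n : ℕ) (hn : 1 ≤ n)
    (ℓ : Fin n → ℝ) (I : Finset (Fin n)) :
    (⨅ t : ℝ, thresholdCost n ℓ I t) =
      Finset.univ.inf' ⟨⟨0, hn⟩, Finset.mem_univ _⟩
        (fun u : Fin n => thresholdCost n ℓ I (ℓ u)) := by
  have hbdd : BddBelow (Set.range fun t => thresholdCost n ℓ I t) :=
    ⟨0, by rintro x ⟨t, rfl⟩; exact thresholdCost_nonneg n ℓ I t⟩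
  apply le_antisymm
  · obtain ⟨u, hu, heq⟩ := Finset.exists_mem_eq_inf' ⟨⟨0, hn⟩, Finset.mem_univ _⟩
      (fun u : Fin n => thresholdCost n ℓ I (ℓ u))
    rw [heq]
    exact ciInf_le hbdd (ℓ u)
  · refine le_ciInf fun t => ?_
    obtain ⟨u, hu⟩ := key n hn ℓ I t
    exact le_trans (Finset.inf'_le _ (Finset.mem_univ u)) hu
end

section
/- Fix n ≥ 1, a vector ℓ ∈ ℝⁿ, and an index set I ⊆ {1,…,n}. Then the top-K distance can be computed by evaluating the threshold cost at the n coordinate values of ℓ: Δ(ℓ, I) = min_{u ∈ {1,…,n}} f_{ℓ,I}(ℓ_u). -/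
-- achievability: thresholdCost at t is an achieved l1 distance
lemma tc_eq_l1 (n : ℕ) (ℓ : Fin n → ℝ) (I : Finset (Fin n)) (t : ℝ) :
    thresholdCost n ℓ I t =
      l1 n (fun k => (if k ∈ I then max (ℓ k) t else min (ℓ k) t) - ℓ k) := by
  unfold thresholdCost l1
  rw [← Finset.sum_add_sum_compl I
    (fun k => |(if k ∈ I then max (ℓ k) t else min (ℓ k) t) - ℓ k|)]
  congr 1
  · refine Finset.sum_congr rfl fun i hi => ?_
    simp only [hi, if_pos]
    rcases le_total (ℓ i) t with h | h
    · rw [max_eq_right h, max_eq_left (by linarith), abs_of_nonneg (by linarith)]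
    · rw [max_eq_left h, max_eq_right (by linarith)]; simp
  · refine Finset.sum_congr rfl fun j hj => ?_
    have hj' : j ∉ I := Finset.mem_compl.mp hj
    simp only [hj', if_neg, not_false_iff]
    rcases le_total (ℓ j) t with h | h
    · rw [min_eq_left h, max_eq_right (by linarith)]; simp
    · rw [min_eq_right h, max_eq_left (by linarith), abs_of_nonpos (by linarith)]
      ring

lemma realizes_thresh (n : ℕ) (ℓ : Fin n → ℝ) (I : Finset (Fin n)) (t : ℝ) :
    realizesTop n I (fun k => if k ∈ I then max (ℓ k) t else min (ℓ k) t) := by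
  intro i hi j hj
  simp only [hi, hj, if_pos, if_neg, not_false_iff]
  exact (min_le_right _ _).trans (le_max_right _ _)

lemma l1_ge_tc (n : ℕ) (ℓ ℓ' : Fin n → ℝ) (I : Finset (Fin n)) (t : ℝ)
    (hI : ∀ i ∈ I, t ≤ ℓ' i) (hC : ∀ j ∉ I, ℓ' j ≤ t) :
    thresholdCost n ℓ I t ≤ l1 n (fun k => ℓ' k - ℓ k) := by
  unfold thresholdCost l1
  rw [← Finset.sum_add_sum_compl I (fun k => |ℓ' k - ℓ k|)]
  refine add_le_add (Finset.sum_le_sum fun i hi => ?_)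
    (Finset.sum_le_sum fun j hj => ?_)
  · refine max_le ?_ (abs_nonneg _)
    have := hI i hi
    calc t - ℓ i ≤ ℓ' i - ℓ i := by linarith
    _ ≤ |ℓ' i - ℓ i| := le_abs_self _
  · have hj' : j ∉ I := Finset.mem_compl.mp hj
    refine max_le ?_ (abs_nonneg _)
    have := hC j hj'
    calc ℓ j - t ≤ ℓ j - ℓ' j := by linarith
    _ ≤ |ℓ' j - ℓ j| := by rw [abs_sub_comm]; exact le_abs_self _

lemma tc_slope (n : ℕ) (ℓ : Fin n → ℝ) (I : Finset (Fin n)) (t1 t2 : ℝ)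
    (h12 : t1 ≤ t2) (H : ∀ k, ℓ k ≤ t1 ∨ t2 ≤ ℓ k) :
    thresholdCost n ℓ I t2 = thresholdCost n ℓ I t1 +
      (t2 - t1) * (((I.filter fun i => ℓ i ≤ t1).card : ℝ)
        - ((Iᶜ.filter fun j => t2 ≤ ℓ j).card : ℝ)) := by
  unfold thresholdCost
  have h1 : ∑ i ∈ I, max (t2 - ℓ i) 0 =
      ∑ i ∈ I, (max (t1 - ℓ i) 0 + if ℓ i ≤ t1 then t2 - t1 else 0) := by
    refine Finset.sum_congr rfl fun i _ => ?_
    by_cases h : ℓ i ≤ t1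
    · rw [if_pos h, max_eq_left (by linarith), max_eq_left (by linarith)]; ring
    · have h2 : t2 ≤ ℓ i := (H i).resolve_left h
      rw [if_neg h, max_eq_right (by linarith), max_eq_right (by linarith)]; ring
  have h2 : ∑ j ∈ Iᶜ, max (ℓ j - t2) 0 =
      ∑ j ∈ Iᶜ, (max (ℓ j - t1) 0 - if t2 ≤ ℓ j then t2 - t1 else 0) := by
    refine Finset.sum_congr rfl fun j _ => ?_
    by_cases h : t2 ≤ ℓ j
    · rw [if_pos h, max_eq_left (by linarith), max_eq_left (by linarith)]; ring
    · have h1' : ℓ j ≤ t1 := (H j).resolve_right h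
      rw [if_neg h, max_eq_right (by linarith), max_eq_right (by linarith)]; ring
  rw [h1, h2, Finset.sum_add_distrib, Finset.sum_sub_distrib,
    ← Finset.sum_filter, ← Finset.sum_filter, Finset.sum_const, Finset.sum_const,
    nsmul_eq_mul, nsmul_eq_mul]
  ring

lemma min_le_tc (n : ℕ) (hn : 1 ≤ n) (ℓ : Fin n → ℝ) (I : Finset (Fin n)) (t : ℝ) :
    Finset.univ.inf' ⟨⟨0, hn⟩, Finset.mem_univ _⟩
        (fun u : Fin n => thresholdCost n ℓ I (ℓ u)) ≤ thresholdCost n ℓ I t := by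
  set m := Finset.univ.inf' ⟨⟨0, hn⟩, Finset.mem_univ _⟩
        (fun u : Fin n => thresholdCost n ℓ I (ℓ u)) with hm
  have hmu : ∀ u : Fin n, m ≤ thresholdCost n ℓ I (ℓ u) := fun u =>
    Finset.inf'_le _ (Finset.mem_univ u)
  by_cases hex : ∃ k, ℓ k = t
  · obtain ⟨k, hk⟩ := hex; rw [← hk]; exact hmu k
  push_neg at hex
  by_cases hL : ∃ k, ℓ k < t
  · by_cases hR : ∃ k, t < ℓ k
    · -- mixed case
      set S1 : Finset (Fin n) := Finset.univ.filter fun k => ℓ k < t with hS1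
      set S2 : Finset (Fin n) := Finset.univ.filter fun k => t < ℓ k with hS2
      have hS1ne : S1.Nonempty := by
        obtain ⟨k, hk⟩ := hL; exact ⟨k, by simp [hS1, hk]⟩
      have hS2ne : S2.Nonempty := by
        obtain ⟨k, hk⟩ := hR; exact ⟨k, by simp [hS2, hk]⟩
      obtain ⟨u, hu, hau⟩ := Finset.exists_mem_eq_sup' hS1ne ℓ
      obtain ⟨v, hv, hbv⟩ := Finset.exists_mem_eq_inf' hS2ne ℓ
      set a := ℓ u with ha
      set b := ℓ v with hb
      have hat : a < t := by
        have := Finset.mem_filter.mp hu; exact this.2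
      have htb : t < b := by
        have := Finset.mem_filter.mp hv; exact this.2
      have hbnda : ∀ k, ℓ k < t → ℓ k ≤ a := by
        intro k hk
        exact le_of_le_of_eq (Finset.le_sup' ℓ (by simp [hS1, hk])) hau
      have hbndb : ∀ k, t < ℓ k → b ≤ ℓ k := by
        intro k hk
        exact le_of_eq_of_le hbv.symm (Finset.inf'_le ℓ (by simp [hS2, hk]))
      have Hsplit : ∀ k, ℓ k < t ∨ t < ℓ k := fun k =>
        (lt_or_gt_of_ne (hex k))
      have H1 : ∀ k, ℓ k ≤ a ∨ t ≤ ℓ k := fun k =>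
        (Hsplit k).imp (hbnda k) le_of_lt
      have H2 : ∀ k, ℓ k ≤ t ∨ b ≤ ℓ k := fun k =>
        (Hsplit k).imp le_of_lt (hbndb k)
      have e1 := tc_slope n ℓ I a t hat.le H1
      have e2 := tc_slope n ℓ I t b htb.le H2
      have hfeq1 : (I.filter fun i => ℓ i ≤ a) = (I.filter fun i => ℓ i ≤ t) := by
        apply Finset.filter_congr
        intro i _
        constructor
        · intro h; exact h.trans hat.le
        · intro h
          refine hbnda i (lt_of_le_of_ne h (hex i))
      have hfeq2 : (Iᶜ.filter fun j => t ≤ ℓ j) = (Iᶜ.filter fun j => b ≤ ℓ j) := by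
        apply Finset.filter_congr
        intro j _
        constructor
        · intro h
          exact hbndb j (lt_of_le_of_ne h (Ne.symm (hex j)))
        · intro h; exact htb.le.trans h
      rw [hfeq1] at e1
      rw [← hfeq2] at e2
      set s : ℝ := ((I.filter fun i => ℓ i ≤ t).card : ℝ)
        - ((Iᶜ.filter fun j => t ≤ ℓ j).card : ℝ) with hs
      rcases le_or_gt 0 s with hs0 | hs0
      · have : thresholdCost n ℓ I a ≤ thresholdCost n ℓ I t := by
          rw [e1]; nlinarith
        exact (hmu u).trans this
      · have : thresholdCost n ℓ I b ≤ thresholdCost n ℓ I t := by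
          rw [e2]; nlinarith
        exact (hmu v).trans this
    · -- all coordinates < t ; take the max
      push_neg at hR
      obtain ⟨u, hu, hau⟩ := Finset.exists_mem_eq_sup'
        (⟨(⟨0, hn⟩ : Fin n), Finset.mem_univ _⟩ : (Finset.univ : Finset (Fin n)).Nonempty) ℓ
      set a := ℓ u with ha
      have hat : a ≤ t := hR u
      have H1 : ∀ k, ℓ k ≤ a ∨ t ≤ ℓ k := fun k => Or.inl
        (le_of_le_of_eq (Finset.le_sup' ℓ (Finset.mem_univ k)) hau)
      have e1 := tc_slope n ℓ I a t hat H1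
      have hc0 : (Iᶜ.filter fun j => t ≤ ℓ j) = ∅ := by
        apply Finset.filter_false_of_mem
        intro j _
        intro h
        exact absurd (lt_of_le_of_ne h (Ne.symm (hex j))) (not_lt.mpr (hR j))
      rw [hc0] at e1
      have : thresholdCost n ℓ I a ≤ thresholdCost n ℓ I t := by
        rw [e1]; simp only [Finset.card_empty, Nat.cast_zero, sub_zero]
        nlinarith [Nat.cast_nonneg (α := ℝ) (I.filter fun i => ℓ i ≤ a).card]
      exact (hmu u).trans this
  · -- all coordinates > t ; take the min
    push_neg at hL
    obtain ⟨v, hv, hbv⟩ := Finset.exists_mem_eq_inf'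
      (⟨(⟨0, hn⟩ : Fin n), Finset.mem_univ _⟩ : (Finset.univ : Finset (Fin n)).Nonempty) ℓ
    set b := ℓ v with hb
    have htb : t ≤ b := hL v
    have H2 : ∀ k, ℓ k ≤ t ∨ b ≤ ℓ k := fun k => Or.inr
      (le_of_eq_of_le hbv.symm (Finset.inf'_le ℓ (Finset.mem_univ k)))
    have e2 := tc_slope n ℓ I t b htb H2
    have hc0 : (I.filter fun i => ℓ i ≤ t) = ∅ := by
      apply Finset.filter_false_of_mem
      intro i _
      intro h
      exact absurd (lt_of_le_of_ne h (hex i)) (not_lt.mpr (hL i))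
    rw [hc0] at e2
    have : thresholdCost n ℓ I b ≤ thresholdCost n ℓ I t := by
      rw [e2]; simp only [Finset.card_empty, Nat.cast_zero, zero_sub]
      nlinarith [Nat.cast_nonneg (α := ℝ) (Iᶜ.filter fun j => b ≤ ℓ j).card]
    exact (hmu v).trans this

theorem topKDist_eq_min_over_coordinates (n : ℕ) (hn : 1 ≤ n)
    (ℓ : Fin n → ℝ) (I : Finset (Fin n)) :
    topKDist n ℓ I =
      Finset.univ.inf' ⟨⟨0, hn⟩, Finset.mem_univ _⟩
        (fun u : Fin n => thresholdCost n ℓ I (ℓ u)) := by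
  set m := Finset.univ.inf' ⟨⟨0, hn⟩, Finset.mem_univ _⟩
        (fun u : Fin n => thresholdCost n ℓ I (ℓ u)) with hm
  set S := {d : ℝ | ∃ ℓ' : Fin n → ℝ, realizesTop n I ℓ' ∧
    d = l1 n (fun k => ℓ' k - ℓ k)} with hS
  -- every element of S is ≥ m
  have hlow : ∀ d ∈ S, m ≤ d := by
    rintro d ⟨ℓ', hreal, rfl⟩
    rcases I.eq_empty_or_nonempty with hIe | hIne
    · set t := Finset.univ.sup' (⟨(⟨0, hn⟩ : Fin n), Finset.mem_univ _⟩ :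
        (Finset.univ : Finset (Fin n)).Nonempty) ℓ' with ht
      refine le_trans (min_le_tc n hn ℓ I t) (l1_ge_tc n ℓ ℓ' I t ?_ ?_)
      · intro i hi; simp [hIe] at hi
      · intro j _; exact Finset.le_sup' ℓ' (Finset.mem_univ j)
    · set t := I.inf' hIne ℓ' with ht
      refine le_trans (min_le_tc n hn ℓ I t) (l1_ge_tc n ℓ ℓ' I t ?_ ?_)
      · intro i hi; exact Finset.inf'_le ℓ' hi
      · intro j hj
        apply Finset.le_inf'
        intro i hi
        exact hreal i hi j hj
  -- m is achieved
  have hmem : m ∈ S := by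
    obtain ⟨u, _, hu⟩ := Finset.exists_mem_eq_inf'
      (⟨(⟨0, hn⟩ : Fin n), Finset.mem_univ _⟩ : (Finset.univ : Finset (Fin n)).Nonempty)
      (fun u : Fin n => thresholdCost n ℓ I (ℓ u))
    refine ⟨fun k => if k ∈ I then max (ℓ k) (ℓ u) else min (ℓ k) (ℓ u),
      realizes_thresh n ℓ I (ℓ u), ?_⟩
    rw [hm, hu]
    exact tc_eq_l1 n ℓ I (ℓ u)
  have hbdd : BddBelow S := ⟨m, hlow⟩
  exact le_antisymm (csInf_le hbdd hmem) (le_csInf ⟨m, hmem⟩ hlow)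
end
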